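/- arXiv:1201.0934 — 2 statements merged into one kernel-verified Lean document; each statement's English description precedes it below -/
import Mathlib

section
/- Let f and ψ be continuous compactly supported functions ℝ^d → ℂ. Then the continuous Gabor transform 𝒢_ψf(x,w) = ∫_{ℝ^d} f(y)·conj(ψ(y−x))·e^{−2πi w·y} dy satisfies the Plancherel formula ∫_{ℝ^d} ∫_{ℝ^d} |𝒢_ψf(x,w)|² dw dx = ‖f‖₂² · ‖ψ‖₂². -/
/-!
For fixed `x`, `w ↦ 𝒢_ψ f (x, w)` is the Fourier transform of `y ↦ f y * conj (ψ (y - x))`, so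
Plancherel turns the inner integral into `∫ |f y|² |ψ (y - x)|² dy`; Fubini and translation
invariance then split the remaining double integral into `‖f‖₂² ‖ψ‖₂²`.

Plancherel for an integrable, square-integrable `g` comes from the `L²` Fourier transform: pairing
with Schwartz test functions shows that `𝓕 g` and the `L²` transform of `g` define the same
tempered distribution, hence agree almost everywhere.
-/

open MeasureTheory FourierTransform
open scoped RealInnerProductSpace

theorem integral_integral_mul_comp_sub {G : Type*} [AddGroup G] [MeasurableSpace G]
    [MeasurableAdd₂ G] [MeasurableNeg G] {μ : Measure G} [SFinite μ] [μ.IsAddRightInvariant]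
    [μ.IsNegInvariant] {φ ψ : G → ℝ} (hφ : Integrable φ μ) (hψ : Integrable ψ μ) :
    ∫ x, ∫ y, φ y * ψ (y - x) ∂μ ∂μ = (∫ y, φ y ∂μ) * ∫ y, ψ y ∂μ := by
  have h := integral_convolution (ContinuousLinearMap.mul ℝ ℝ) hφ (hψ.comp_neg (μ := μ))
  simpa [convolution_def, neg_sub, integral_neg_eq_self] using h

theorem MeasureTheory.L2.integral_norm_sq_eq_norm_sq {α F : Type*} [MeasurableSpace α]
    {μ : Measure α} [NormedAddCommGroup F] [InnerProductSpace ℂ F] (f : Lp F 2 μ) :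
    ∫ x, ‖f x‖ ^ 2 ∂μ = ‖f‖ ^ 2 := by
  have h := congr_arg RCLike.re (L2.inner_def (𝕜 := ℂ) f f)
  rw [← integral_re (L2.integrable_inner f f)] at h
  simpa only [← norm_sq_eq_re_inner] using h.symm

section Fourier

variable {V F : Type*} [NormedAddCommGroup V] [InnerProductSpace ℝ V] [FiniteDimensional ℝ V]
  [MeasurableSpace V] [BorelSpace V]
  [NormedAddCommGroup F] [InnerProductSpace ℂ F] [CompleteSpace F]

theorem integral_fourier_smul_eq_integral_smul_fourier {φ : V → ℂ} {g : V → F}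
    (hφ : Integrable φ) (hg : Integrable g) :
    ∫ ξ, 𝓕 φ ξ • g ξ = ∫ x, φ x • 𝓕 g x := by
  simpa using! VectorFourier.integral_fourierIntegral_smul_eq_flip (L := innerₗ V)
    Real.continuous_fourierChar continuous_inner hφ hg

theorem fourier_ae_eq_fourier_toLp {g : V → F} (hg₁ : Integrable g) (hg₂ : MemLp g 2) :
    𝓕 g =ᵐ[volume] ((𝓕 (hg₂.toLp g) : Lp F 2 (volume : Measure V)) : V → F) := by
  refine ae_eq_of_integral_contDiff_smul_eq
    ((VectorFourier.fourierIntegral_continuous Real.continuous_fourierChar continuous_inner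
      hg₁).locallyIntegrable)
    ((Lp.memLp _).locallyIntegrable one_le_two) fun φ hφ hφ_supp ↦ ?_
  have hφℂ : HasCompactSupport (Complex.ofRealCLM ∘ φ) := hφ_supp.comp_left rfl
  set ψ : SchwartzMap V ℂ := hφℂ.toSchwartzMap (by fun_prop)
  calc ∫ x, φ x • 𝓕 g x = ∫ x, ψ x • 𝓕 g x := by simp [ψ]
    _ = ∫ x, 𝓕 ψ x • g x := (integral_fourier_smul_eq_integral_smul_fourier ψ.integrable hg₁).symm
    _ = Lp.toTemperedDistribution (hg₂.toLp g) (𝓕 ψ) := by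
      rw [Lp.toTemperedDistribution_apply]
      exact integral_congr_ae (by filter_upwards [hg₂.coeFn_toLp] with x hx; rw [hx])
    _ = Lp.toTemperedDistribution (𝓕 (hg₂.toLp g)) ψ := by
      rw [← Lp.fourier_toTemperedDistribution_eq]; rfl
    _ = _ := by simp [ψ]

theorem integral_norm_sq_fourier {g : V → F} (hg₁ : Integrable g) (hg₂ : MemLp g 2) :
    ∫ ξ, ‖𝓕 g ξ‖ ^ 2 = ∫ x, ‖g x‖ ^ 2 := calc
  _ = ∫ ξ, ‖(𝓕 (hg₂.toLp g) : Lp F 2 (volume : Measure V)) ξ‖ ^ 2 :=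
    integral_congr_ae (by filter_upwards [fourier_ae_eq_fourier_toLp hg₁ hg₂] with ξ h; rw [h])
  _ = ‖hg₂.toLp g‖ ^ 2 := by rw [L2.integral_norm_sq_eq_norm_sq, Lp.norm_fourier_eq]
  _ = ∫ x, ‖g x‖ ^ 2 := by
    rw [← L2.integral_norm_sq_eq_norm_sq]
    exact integral_congr_ae (by filter_upwards [hg₂.coeFn_toLp] with x h; rw [h])

end Fourier

section Gabor

variable {V : Type*} [NormedAddCommGroup V] [InnerProductSpace ℝ V] [FiniteDimensional ℝ V]
  [MeasurableSpace V] [BorelSpace V]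

theorem fourier_eq_integral_mul_exp (g : V → ℂ) (w : V) :
    𝓕 g w = ∫ y, g y * Complex.exp (-(2 * Real.pi * Complex.I) * (⟪w, y⟫ : ℝ)) := by
  rw [Real.fourier_eq']
  congr 1 with y
  rw [smul_eq_mul, mul_comm, real_inner_comm]
  push_cast
  ring_nf

theorem integral_norm_sq_fourier_mul_conj_comp_sub {f ψ : V → ℂ} (hf : Continuous f)
    (hf_supp : HasCompactSupport f) (hψ : Continuous ψ) (x : V) :
    ∫ w, ‖𝓕 (fun y ↦ f y * (starRingEnd ℂ) (ψ (y - x))) w‖ ^ 2 =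
      ∫ y, ‖f y‖ ^ 2 * ‖ψ (y - x)‖ ^ 2 := by
  have hg : Continuous fun y ↦ f y * (starRingEnd ℂ) (ψ (y - x)) := by fun_prop
  have hg_supp : HasCompactSupport fun y ↦ f y * (starRingEnd ℂ) (ψ (y - x)) :=
    hf_supp.mul_right
  rw [integral_norm_sq_fourier (hg.integrable_of_hasCompactSupport hg_supp)
    (hg.memLp_of_hasCompactSupport hg_supp)]
  simp only [norm_mul, Complex.norm_conj, mul_pow]

end Gabor

/-- For continuous compactly supported `f, ψ : ℝ^d → ℂ`, the continuous
Gabor transform `𝒢_ψf(x,w) = ∫ f(y)·conj(ψ(y−x))·e^{−2πi w·y} dy` satisfies the Plancherel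
formula `∫∫ |𝒢_ψf(x,w)|² dw dx = ‖f‖₂² · ‖ψ‖₂²`. -/
theorem gabor_plancherel_euclidean {d : ℕ}
    (f ψ : EuclideanSpace ℝ (Fin d) → ℂ)
    (hf_cont : Continuous f) (hf_supp : HasCompactSupport f)
    (hψ_cont : Continuous ψ) (hψ_supp : HasCompactSupport ψ) :
    ∫ x : EuclideanSpace ℝ (Fin d), ∫ w : EuclideanSpace ℝ (Fin d),
        ‖∫ y : EuclideanSpace ℝ (Fin d),
            f y * (starRingEnd ℂ) (ψ (y - x)) *
              Complex.exp (-(2 * Real.pi * Complex.I) * (⟪w, y⟫ : ℝ))‖ ^ 2 =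
      (∫ y : EuclideanSpace ℝ (Fin d), ‖f y‖ ^ 2) *
        (∫ y : EuclideanSpace ℝ (Fin d), ‖ψ y‖ ^ 2) := by
  have integrable_norm_sq {g : EuclideanSpace ℝ (Fin d) → ℂ} (hg : Continuous g)
      (hg_supp : HasCompactSupport g) : Integrable fun y ↦ ‖g y‖ ^ 2 :=
    (memLp_two_iff_integrable_sq_norm hg.aestronglyMeasurable).1
      (hg.memLp_of_hasCompactSupport hg_supp)
  simp_rw [← fourier_eq_integral_mul_exp,
    integral_norm_sq_fourier_mul_conj_comp_sub hf_cont hf_supp hψ_cont]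
  exact integral_integral_mul_comp_sub (integrable_norm_sq hf_cont hf_supp)
    (integrable_norm_sq hψ_cont hψ_supp)
end

section
/- Let f, ψ, φ be Schwartz functions ℝ^d → ℂ with ⟨φ,ψ⟩ = ∫_{ℝ^d} φ(y)·conj(ψ(y)) dy ≠ 0. Then for every t ∈ ℝ^d the inversion formula holds: f(t) = ⟨φ,ψ⟩⁻¹ · ∫_{ℝ^d} ∫_{ℝ^d} 𝒢_ψf(x,w) · e^{2πi w·t} · φ(t−x) dw dx, where 𝒢_ψf(x,w) = ∫_{ℝ^d} f(y)·conj(ψ(y−x))·e^{−2πi w·y} dy. -/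
/-!
For fixed `x`, the inner `w`-integral is Fourier inversion applied to the Schwartz function
`y ↦ f y * conj (ψ (y - x))`, so it equals `f t * conj (ψ (t - x))`. Integrating this against
`φ (t - x)` over `x` and translating gives `f t * ⟨φ, ψ⟩`.
-/

open MeasureTheory
open scoped RealInnerProductSpace SchwartzMap

namespace SchwartzMap

variable {V : Type*} [NormedAddCommGroup V] [InnerProductSpace ℝ V] [FiniteDimensional ℝ V]
  [MeasurableSpace V] [BorelSpace V]

open FourierTransform in
theorem integral_fourier_mul_exp_eq (g : 𝓢(V, ℂ)) (t : V) :
    ∫ w : V, (∫ y : V, g y * Complex.exp (-(2 * Real.pi * Complex.I) * (⟪w, y⟫ : ℝ))) *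
      Complex.exp ((2 * Real.pi * Complex.I) * (⟪w, t⟫ : ℝ)) = g t := by
  have hinv : 𝓕⁻ (𝓕 (g : V → ℂ)) t = g t := by
    rw [← fourier_coe, ← fourierInv_coe, fourierInv_fourier_eq]
  have hfourier : ∀ w : V, 𝓕 (g : V → ℂ) w =
      ∫ y : V, g y * Complex.exp (-(2 * Real.pi * Complex.I) * (⟪w, y⟫ : ℝ)) := fun w => by
    rw [Real.fourier_eq']
    congr 1 with y
    rw [smul_eq_mul, mul_comm, real_inner_comm]
    push_cast
    ring_nf
  rw [← hinv, Real.fourierInv_eq']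
  congr 1 with w
  rw [hfourier, smul_eq_mul, mul_comm]
  push_cast
  ring_nf

theorem integral_gaborTransform_mul_exp_eq (f ψ : 𝓢(V, ℂ)) (x t : V) :
    ∫ w : V, (∫ y : V, f y * (starRingEnd ℂ) (ψ (y - x)) *
        Complex.exp (-(2 * Real.pi * Complex.I) * (⟪w, y⟫ : ℝ))) *
      Complex.exp ((2 * Real.pi * Complex.I) * (⟪w, t⟫ : ℝ)) =
      f t * (starRingEnd ℂ) (ψ (t - x)) :=
  integral_fourier_mul_exp_eq (pairing (ContinuousLinearMap.mul ℝ ℂ) f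
    (postcompCLM Complex.conjCLE.toContinuousLinearMap (compSubConstCLM ℝ x ψ))) t

end SchwartzMap

/-- Let `f, ψ, φ` be Schwartz functions `ℝ^d → ℂ` with
`⟨φ,ψ⟩ = ∫ φ(y)·conj(ψ(y)) dy ≠ 0`. Then for every `t ∈ ℝ^d` the inversion formula holds:
`f(t) = ⟨φ,ψ⟩⁻¹ · ∫∫ 𝒢_ψf(x,w)·e^{2πi w·t}·φ(t−x) dw dx`. -/
theorem gabor_inversion_euclidean {d : ℕ}
    (f ψ φ : 𝓢(EuclideanSpace ℝ (Fin d), ℂ))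
    (hne : (∫ y : EuclideanSpace ℝ (Fin d), φ y * (starRingEnd ℂ) (ψ y)) ≠ 0)
    (t : EuclideanSpace ℝ (Fin d)) :
    f t = (∫ y : EuclideanSpace ℝ (Fin d), φ y * (starRingEnd ℂ) (ψ y))⁻¹ *
      ∫ x : EuclideanSpace ℝ (Fin d), ∫ w : EuclideanSpace ℝ (Fin d),
        (∫ y : EuclideanSpace ℝ (Fin d),
            f y * (starRingEnd ℂ) (ψ (y - x)) *
              Complex.exp (-(2 * Real.pi * Complex.I) * (⟪w, y⟫ : ℝ))) *
          Complex.exp ((2 * Real.pi * Complex.I) * (⟪w, t⟫ : ℝ)) * φ (t - x) := by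
  have inner_integral : ∀ x : EuclideanSpace ℝ (Fin d), ∫ w : EuclideanSpace ℝ (Fin d),
      (∫ y : EuclideanSpace ℝ (Fin d),
          f y * (starRingEnd ℂ) (ψ (y - x)) *
            Complex.exp (-(2 * Real.pi * Complex.I) * (⟪w, y⟫ : ℝ))) *
        Complex.exp ((2 * Real.pi * Complex.I) * (⟪w, t⟫ : ℝ)) * φ (t - x) =
      f t * (φ (t - x) * (starRingEnd ℂ) (ψ (t - x))) := fun x => by
    rw [integral_mul_const, SchwartzMap.integral_gaborTransform_mul_exp_eq]
    ring
  rw [integral_congr_ae (.of_forall inner_integral), integral_const_mul,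
    integral_sub_left_eq_self (fun u => φ u * (starRingEnd ℂ) (ψ u)), mul_comm (f t),
    inv_mul_cancel_left₀ hne]
end
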